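/- Let L be a Lévy sheet with exponent Ψ = a + ib, m an even number, θ ∈ (0,2π) with a(θ)a(2θ)···a(mθ) ≠ 0, and set a*(θ) = min{a(θ),...,a(mθ)}. Fix 0 < s₀ < s₀' < 2s₀, 0 < t₀ < t₀' < 2t₀. Then for any points (x_j, y_j), j = 1,...,m, with s₀ < x_j < s₀' and t₀ < y_j < t₀': E[∏_{j=1}^m cos(θ L(√n x_j, √n y_j))] ≤ exp(−(n/2) a*(θ) Σ_{odd pairs} x_{(2k−1)}(y_{(2k)} − y_{(2k−1)})) · exp(−(n/2) a*(θ) Σ_{odd pairs} y_{(2k−1)}(x_{(2k)} − x_{(2k−1)})), where x_{(1)} ≤ ... ≤ x_{(m)} and y_{(1)} ≤ ... ≤ y_{(m)} are the sorted values and the sums run over k = 1,...,m/2 pairing consecutive order statistics. -/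

import Mathlib

/-!
Writing each cosine as `(e^{iθL} + e^{-iθL}) / 2` turns the product into an average over the `2^m`
sign patterns `δ` of `E exp(iθ ∑ δ_j L(p_j))`, so it suffices to bound each of these in modulus.
Cut the quadrant by the grid whose lines are the sorted coordinates of the points. Each `L(p_j)` is
the sum of the increments of `L` over the cells below and to the left of `p_j`, so
`∑ δ_j L(p_j) = ∑ C_Q Δ_Q L` with integer coefficients `C_Q`, and the independence of the cell
increments gives the modulus `exp (-∑ λ(Q) a(θ C_Q))`. All terms are nonnegative; keep only the
cells `(0, x_(1)] × (y_(2k-1), y_(2k)]` and their mirror images. Such a cell lies below and to the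
left of exactly `m - 2k + 1` points, an odd number, so `C_Q`, a sum of that many signs, is odd,
hence nonzero, and at most `m` in absolute value; thus `a(θ C_Q) ≥ a*(θ)` by the symmetry of `a`.
Finally `x_(2k-1) < s₀' < 2 s₀ < 2 x_(1)` bounds the area of the cell below by
`x_(2k-1) (y_(2k) - y_(2k-1)) / 2`. The factor `n` comes from `L(√n ·, √n ·)` being a Lévy sheet
with exponent `nΨ`.
-/

open MeasureTheory

def rectIncrement (F : ℝ → ℝ → ℝ) (s t s' t' : ℝ) : ℝ := F s' t' - F s' t - F s t' + F s t

def zeroCons (xs : ℕ → ℝ) : ℕ → ℝ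
  | 0 => 0
  | i + 1 => xs i

section Grid

open Finset

theorem sum_range_sum_range_rectIncrement (F : ℝ → ℝ → ℝ) (u v : ℕ → ℝ) (R C : ℕ) :
    ∑ i ∈ range R, ∑ i' ∈ range C, rectIncrement F (u i) (v i') (u (i + 1)) (v (i' + 1))
      = rectIncrement F (u 0) (v 0) (u R) (v C) := by
  have hrow : ∀ i, ∑ i' ∈ range C, rectIncrement F (u i) (v i') (u (i + 1)) (v (i' + 1))
      = (F (u (i + 1)) (v C) - F (u i) (v C)) - (F (u (i + 1)) (v 0) - F (u i) (v 0)) := fun i => by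
    rw [← sum_range_sub (fun i' => F (u (i + 1)) (v i') - F (u i) (v i'))]
    exact sum_congr rfl fun i' _ => by simp only [rectIncrement]; ring
  rw [sum_congr rfl fun i _ => hrow i, sum_sub_distrib,
    sum_range_sub (fun i => F (u i) (v C)), sum_range_sub (fun i => F (u i) (v 0))]
  simp only [rectIncrement]; ring

theorem sum_range_ite_lt {M : Type*} [AddCommMonoid M] (g : ℕ → M) {R P : ℕ} (h : R ≤ P) :
    ∑ i ∈ range P, (if i < R then g i else 0) = ∑ i ∈ range R, g i := by
  rw [← sum_filter]
  congr 1
  ext i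
  simp only [mem_filter, mem_range]
  omega

theorem sum_mul_eq_sum_sum_rectIncrement {ι : Type*} (s : Finset ι) (z : ι → ℝ) {r c : ι → ℕ}
    {P Q : ℕ} (hr : ∀ j ∈ s, r j ≤ P) (hc : ∀ j ∈ s, c j ≤ Q) (F : ℝ → ℝ → ℝ) (u v : ℕ → ℝ)
    (hFu : ∀ q, F (u 0) q = 0) (hFv : ∀ p, F p (v 0) = 0) :
    ∑ j ∈ s, z j * F (u (r j)) (v (c j)) =
      ∑ i ∈ range P, ∑ i' ∈ range Q, (∑ j ∈ s with i < r j ∧ i' < c j, z j) *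
        rectIncrement F (u i) (v i') (u (i + 1)) (v (i' + 1)) := by
  have hpoint : ∀ j ∈ s, F (u (r j)) (v (c j)) = ∑ i ∈ range P, ∑ i' ∈ range Q,
      if i < r j ∧ i' < c j then rectIncrement F (u i) (v i') (u (i + 1)) (v (i' + 1)) else 0 := by
    intro j hj
    have hcorner : F (u (r j)) (v (c j)) = rectIncrement F (u 0) (v 0) (u (r j)) (v (c j)) := by
      simp only [rectIncrement, hFu, hFv]; ring
    rw [hcorner, ← sum_range_sum_range_rectIncrement, ← sum_range_ite_lt _ (hr j hj)]
    refine sum_congr rfl fun i _ => ?_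
    rw [← sum_range_ite_lt _ (hc j hj)]
    split_ifs with hi
    · simp only [hi, true_and]
    · simp [hi]
  rw [sum_congr rfl fun j hj => by rw [hpoint j hj]]
  simp_rw [sum_filter, sum_mul, mul_sum]
  rw [sum_comm]
  refine sum_congr rfl fun i _ => ?_
  rw [sum_comm]
  refine sum_congr rfl fun i' _ => sum_congr rfl fun j _ => ?_
  split_ifs <;> simp

theorem sum_range_mul_div_mod {M : Type*} [AddCommMonoid M] (P Q : ℕ) (f : ℕ → ℕ → M) :
    ∑ e ∈ range (P * Q), f (e / Q) (e % Q) = ∑ i ∈ range P, ∑ i' ∈ range Q, f i i' := by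
  induction P with
  | zero => simp
  | succ p ih =>
    rw [Nat.succ_mul, sum_range_add, ih, sum_range_succ]
    congr 1
    refine sum_congr rfl fun j hj => ?_
    have hjQ : j < Q := mem_range.mp hj
    rw [Nat.mul_comm, Nat.mul_add_div (by omega), Nat.div_eq_of_lt hjQ, Nat.mul_add_mod,
      Nat.mod_eq_of_lt hjQ, Nat.add_zero]

theorem sum_odd_row_add_odd_col_le {f : ℕ → ℕ → ℝ} {M P : ℕ}
    (hf : ∀ i < P, ∀ i' < P, 0 ≤ f i i') (hMP : 2 * M ≤ P) :
    ∑ k ∈ range M, (f 0 (2 * k + 1) + f (2 * k + 1) 0) ≤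
      ∑ i ∈ range P, ∑ i' ∈ range P, f i i' := by
  set row := (range M).image fun k => (0, 2 * k + 1)
  set col := (range M).image fun k => (2 * k + 1, 0)
  have hrow : Set.InjOn (fun k => (0, 2 * k + 1)) (range M) := fun k _ l _ h => by
    simp at h; omega
  have hcol : Set.InjOn (fun k => (2 * k + 1, 0)) (range M) := fun k _ l _ h => by
    simp at h; omega
  have hdisj : Disjoint row col := by
    simp only [row, col, disjoint_left, mem_image]
    rintro _ ⟨k, -, rfl⟩ ⟨l, -, h⟩
    simp at h
  rw [sum_add_distrib, ← sum_image (f := fun p => f p.1 p.2) hrow,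
    ← sum_image (f := fun p => f p.1 p.2) hcol, ← sum_union hdisj, ← sum_product']
  refine sum_le_sum_of_subset_of_nonneg ?_ fun p hp _ => ?_
  · intro p hp
    simp only [row, col, mem_union, mem_image, mem_range, mem_product] at hp ⊢
    rcases hp with ⟨k, hk, rfl⟩ | ⟨k, hk, rfl⟩ <;> omega
  · simp only [mem_product, mem_range] at hp
    exact hf _ hp.1 _ hp.2

end Grid

theorem MonotoneOn.disjoint_Ioc_succ {u : ℕ → ℝ} {P : ℕ} (hu : MonotoneOn u (Set.Iic P))
    {i j : ℕ} (hi : i < P) (hj : j < P) (hij : i ≠ j) :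
    Disjoint (Set.Ioc (u i) (u (i + 1))) (Set.Ioc (u j) (u (j + 1))) := by
  rcases hij.lt_or_gt with h | h
  · exact Set.Ioc_disjoint_Ioc_of_le (hu (by simp; omega) (by simp; omega) h)
  · exact (Set.Ioc_disjoint_Ioc_of_le (hu (by simp; omega) (by simp; omega) h)).symm

theorem MonotoneOn.nonneg_and_le_succ {u : ℕ → ℝ} {P : ℕ} (hu : MonotoneOn u (Set.Iic P))
    (hu0 : 0 ≤ u 0) {i : ℕ} (hi : i < P) : 0 ≤ u i ∧ u i ≤ u (i + 1) :=
  ⟨hu0.trans (hu (by simp) (by simp; omega) (Nat.zero_le i)),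
    hu (by simp; omega) (by simp; omega) (Nat.le_succ i)⟩

theorem monotoneOn_zeroCons_of_le_two_mul {xs : ℕ → ℝ} {m : ℕ}
    (hmono : ∀ i j, i ≤ j → j < m → xs i ≤ xs j) (h2 : ∀ i < m, xs i ≤ 2 * xs 0) :
    MonotoneOn (zeroCons xs) (Set.Iic m) := by
  rintro (_ | i) hi (_ | j) hj hij <;> simp only [Set.mem_Iic] at hi hj
  · exact le_rfl
  · show 0 ≤ xs j
    linarith [h2 0 (by omega), hmono 0 j (Nat.zero_le j) (by omega)]
  · omega
  · exact hmono i j (by omega) (by omega)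

theorem half_mul_sum_paired_le_sum_sum_zeroCons {m : ℕ} {xs ys : ℕ → ℝ} {A : ℝ}
    {R : ℕ → ℕ → ℝ} (hxsmono : ∀ i j, i ≤ j → j < m → xs i ≤ xs j)
    (hysmono : ∀ i j, i ≤ j → j < m → ys i ≤ ys j)
    (hxs2 : ∀ i < m, xs i ≤ 2 * xs 0) (hys2 : ∀ i < m, ys i ≤ 2 * ys 0) (hA : 0 ≤ A)
    (hR : ∀ i < m, ∀ i' < m, 0 ≤ R i i')
    (hRodd : ∀ k, 2 * k + 1 < m → A ≤ R 0 (2 * k + 1) ∧ A ≤ R (2 * k + 1) 0) :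
    A / 2 * (∑ k ∈ Finset.range (m / 2), xs (2 * k) * (ys (2 * k + 1) - ys (2 * k))
        + ∑ k ∈ Finset.range (m / 2), ys (2 * k) * (xs (2 * k + 1) - xs (2 * k)))
      ≤ ∑ i ∈ Finset.range m, ∑ i' ∈ Finset.range m,
          (zeroCons xs (i + 1) - zeroCons xs i) * (zeroCons ys (i' + 1) - zeroCons ys i') *
            R i i' := by
  have hxs0 : 0 < m → 0 ≤ xs 0 := fun hm => by linarith [hxs2 0 hm]
  have hys0 : 0 < m → 0 ≤ ys 0 := fun hm => by linarith [hys2 0 hm]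
  have hu := monotoneOn_zeroCons_of_le_two_mul hxsmono hxs2
  have hv := monotoneOn_zeroCons_of_le_two_mul hysmono hys2
  -- `a₀ - 0` is the width `zeroCons xs 1 - zeroCons xs 0` of the first column (or row)
  have hstrip : ∀ {a a₀ d r : ℝ}, a ≤ 2 * a₀ → 0 ≤ a₀ → 0 ≤ d → A ≤ r →
      A / 2 * (a * d) ≤ (a₀ - 0) * d * r := by
    intro a a₀ d r ha ha₀ hd hr
    calc A / 2 * (a * d) ≤ A / 2 * (2 * a₀ * d) := by gcongr
      _ = (a₀ - 0) * d * A := by ring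
      _ ≤ (a₀ - 0) * d * r := by gcongr
  refine le_trans ?_ (sum_odd_row_add_odd_col_le (M := m / 2) (fun i hi i' hi' =>
    mul_nonneg (mul_nonneg (sub_nonneg.2 (hu.nonneg_and_le_succ le_rfl hi).2)
      (sub_nonneg.2 (hv.nonneg_and_le_succ le_rfl hi').2)) (hR i hi i' hi')) (by omega))
  rw [mul_add, Finset.mul_sum, Finset.mul_sum, ← Finset.sum_add_distrib]
  refine Finset.sum_le_sum fun k hk => ?_
  have hk : 2 * k + 1 < m := by rw [Finset.mem_range] at hk; omega
  refine add_le_add ?_ ?_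
  · exact hstrip (hxs2 _ (by omega)) (hxs0 (by omega))
      (sub_nonneg.2 (hysmono _ _ (by omega) hk)) (hRodd k hk).1
  · exact (hstrip (hys2 _ (by omega)) (hys0 (by omega))
      (sub_nonneg.2 (hxsmono _ _ (by omega) hk)) (hRodd k hk).2).trans_eq
      (by simp only [zeroCons]; ring)

section Parity

open Finset

theorem Finset.odd_sum_of_odd_card {ι : Type*} {s : Finset ι} {δ : ι → ℤ}
    (hδ : ∀ j ∈ s, Odd (δ j)) (hs : Odd #s) : Odd (∑ j ∈ s, δ j) := by
  have hsplit : ∑ j ∈ s, δ j = ∑ j ∈ s, (δ j - 1) + #s := by simp [sum_sub_distrib]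
  rw [hsplit]
  exact (even_sum _ fun j hj => (hδ j hj).sub_odd odd_one).add_odd (by exact_mod_cast hs)

theorem Finset.natAbs_sum_le_card {ι : Type*} {s : Finset ι} {δ : ι → ℤ}
    (hδ : ∀ j ∈ s, δ j = 1 ∨ δ j = -1) : (∑ j ∈ s, δ j).natAbs ≤ #s :=
  (Int.natAbs_sum_le _ _).trans_eq <| by
    rw [card_eq_sum_ones]
    exact sum_congr rfl fun j hj => by rcases hδ j hj with h | h <;> simp [h]

theorem Equiv.Perm.card_filter_lt_apply {m : ℕ} (τ : Equiv.Perm (Fin m)) (K : ℕ) :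
    #{j | K < (τ j : ℕ)} = m - 1 - K := by
  rw [card_equiv τ (t := {l : Fin m | K < (l : ℕ)}) (fun j => by simp)]
  have h := card_filter_add_card_filter_not (s := (univ : Finset (Fin m)))
    (fun l : Fin m => (l : ℕ) < K + 1)
  rw [Fin.card_filter_val_lt, card_univ, Fintype.card_fin] at h
  simp only [not_lt, Nat.succ_le_iff] at h
  omega

theorem Equiv.Perm.sum_filter_two_mul_lt_apply_ne_zero_and_natAbs_le {m : ℕ} (hm : Even m)
    (τ : Equiv.Perm (Fin m)) {k : ℕ} (hk : 2 * k < m) {δ : Fin m → ℤ}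
    (hδ : ∀ j, δ j = 1 ∨ δ j = -1) :
    ∑ j with 2 * k < (τ j : ℕ), δ j ≠ 0 ∧ (∑ j with 2 * k < (τ j : ℕ), δ j).natAbs ≤ m := by
  have hodd : Odd (∑ j with 2 * k < (τ j : ℕ), δ j) := by
    refine odd_sum_of_odd_card (fun j _ => by rcases hδ j with h | h <;> simp [h]) ?_
    rw [τ.card_filter_lt_apply, Nat.sub_sub]
    exact Nat.Even.sub_odd (by omega) hm (by rw [add_comm]; exact odd_two_mul_add_one k)
  refine ⟨fun h0 => by simp [h0] at hodd, ?_⟩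
  exact (natAbs_sum_le_card fun j _ => hδ j).trans ((card_le_univ _).trans_eq (Fintype.card_fin m))

end Parity

section Cosines

open Finset

theorem prod_cos_eq_sum_exp {ι : Type*} [DecidableEq ι] (s : Finset ι) (w : ι → ℝ) :
    ((∏ j ∈ s, Real.cos (w j) : ℝ) : ℂ) = (2 ^ #s)⁻¹ * ∑ T ∈ s.powerset,
      Complex.exp (Complex.I * ((∑ j ∈ s, ((if j ∈ T then 1 else -1 : ℤ) : ℝ) * w j : ℝ) : ℂ)) := by
  simp_rw [Complex.ofReal_prod, Complex.ofReal_cos, Complex.cos, prod_div_distrib, prod_const,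
    prod_add]
  rw [div_eq_inv_mul]
  congr 1
  refine sum_congr rfl fun T hT => ?_
  have hsign : ∑ j ∈ s, ((if j ∈ T then 1 else -1 : ℤ) : ℝ) * w j
      = ∑ j ∈ T, w j - ∑ j ∈ s \ T, w j := by
    rw [← sum_sdiff (mem_powerset.mp hT), sum_congr rfl fun j hj => by
      rw [if_neg (mem_sdiff.mp hj).2], sum_congr rfl fun j (hj : j ∈ T) => by rw [if_pos hj]]
    simp only [Int.cast_neg, Int.cast_one, neg_one_mul, one_mul, sum_neg_distrib]
    ring
  rw [← Complex.exp_sum, ← Complex.exp_sum, ← Complex.exp_add, hsign]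
  push_cast
  simp only [mul_comm Complex.I, neg_mul, sum_neg_distrib, sub_eq_add_neg]
  rw [add_mul, neg_mul, sum_mul, sum_mul]

theorem integral_prod_cos_le {Ω ι : Type*} [MeasurableSpace Ω] {μ : Measure Ω} [IsFiniteMeasure μ]
    (s : Finset ι) {w : ι → Ω → ℝ} (hw : ∀ j ∈ s, Measurable (w j)) {B : ℝ}
    (hB : ∀ δ : ι → ℤ, (∀ j, δ j = 1 ∨ δ j = -1) →
      ‖∫ ω, Complex.exp (Complex.I * ((∑ j ∈ s, (δ j : ℝ) * w j ω : ℝ) : ℂ)) ∂μ‖ ≤ B) :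
    ∫ ω, ∏ j ∈ s, Real.cos (w j ω) ∂μ ≤ B := by
  classical
  have hint : ∀ T : Finset ι, Integrable (fun ω => Complex.exp (Complex.I *
      ((∑ j ∈ s, ((if j ∈ T then 1 else -1 : ℤ) : ℝ) * w j ω : ℝ) : ℂ))) μ := fun T => by
    refine (integrable_const (1 : ℝ)).mono' ?_ (ae_of_all _ fun ω => ?_)
    · refine (Complex.measurable_exp.comp ((Complex.measurable_ofReal.comp ?_).const_mul _))
        |>.aestronglyMeasurable
      exact measurable_sum _ fun j hj => (hw j hj).const_mul _
    · simp [Complex.norm_exp]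
  have hsign : ∀ (T : Finset ι) j,
      (if j ∈ T then 1 else -1 : ℤ) = 1 ∨ (if j ∈ T then 1 else -1 : ℤ) = -1 :=
    fun T j => by split_ifs <;> simp
  calc ∫ ω, ∏ j ∈ s, Real.cos (w j ω) ∂μ
      = ((2 : ℝ) ^ #s)⁻¹ * ∑ T ∈ s.powerset, (∫ ω, Complex.exp (Complex.I *
          ((∑ j ∈ s, ((if j ∈ T then 1 else -1 : ℤ) : ℝ) * w j ω : ℝ) : ℂ)) ∂μ).re := by
        rw [← Complex.ofReal_re (∫ ω, _ ∂μ), ← integral_complex_ofReal]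
        simp_rw [prod_cos_eq_sum_exp]
        rw [integral_const_mul, integral_finsetSum _ fun T _ => hint T,
          show ((2 : ℂ) ^ #s)⁻¹ = (((2 : ℝ) ^ #s)⁻¹ : ℝ) by push_cast; rfl,
          Complex.re_ofReal_mul, Complex.re_sum]
    _ ≤ ((2 : ℝ) ^ #s)⁻¹ * ∑ T ∈ s.powerset, B := by
        gcongr with T
        exact (Complex.re_le_norm _).trans (hB _ (hsign T))
    _ = B := by rw [sum_const, card_powerset, nsmul_eq_mul]; push_cast; field_simp

end Cosines

def HasLevySheetExponent {Ω : Type*} [MeasurableSpace Ω] (μ : Measure Ω)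
    (L : ℝ → ℝ → Ω → ℝ) (Ψ : ℝ → ℂ) : Prop :=
  ∀ (k : ℕ) (s t s' t' ξ : ℕ → ℝ),
    (∀ j, j < k → 0 ≤ s j ∧ s j ≤ s' j ∧ 0 ≤ t j ∧ t j ≤ t' j) →
    (∀ i j, i < k → j < k → i ≠ j →
      Disjoint (Set.Ioc (s i) (s' i) ×ˢ Set.Ioc (t i) (t' i))
        (Set.Ioc (s j) (s' j) ×ˢ Set.Ioc (t j) (t' j))) →
    ∫ ω, Complex.exp (Complex.I * (∑ j ∈ Finset.range k,
        (ξ j : ℂ) * (rectIncrement (fun p q => L p q ω) (s j) (t j) (s' j) (t' j) : ℂ))) ∂μ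
      = Complex.exp (-∑ j ∈ Finset.range k, (((s' j - s j) * (t' j - t j) : ℝ) : ℂ) * Ψ (ξ j))

namespace HasLevySheetExponent

variable {Ω : Type*} [MeasurableSpace Ω] {μ : Measure Ω} {L : ℝ → ℝ → Ω → ℝ} {Ψ : ℝ → ℂ}

open Finset

theorem re_neg (hL : HasLevySheetExponent μ L Ψ) (ξ : ℝ) : (Ψ (-ξ)).re = (Ψ ξ).re := by
  have hunit : ∀ w : ℝ, ∫ ω, Complex.exp (Complex.I * ((w : ℂ) *
      (rectIncrement (fun p q => L p q ω) 0 0 1 1 : ℂ))) ∂μ = Complex.exp (-Ψ w) := fun w => by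
    simpa using hL 1 0 0 1 1 (fun _ => w) (fun _ _ => by norm_num) (fun i j hi hj hij => by omega)
  have hconj : Complex.exp (-Ψ (-ξ)) = starRingEnd ℂ (Complex.exp (-Ψ ξ)) := by
    rw [← hunit, ← hunit, ← integral_conj]
    congr 1; funext ω
    rw [← Complex.exp_conj]
    simp only [map_mul, Complex.conj_I, Complex.conj_ofReal, Complex.ofReal_neg]
    ring_nf
  simpa [Complex.norm_exp] using congrArg (‖·‖) hconj

theorem comp_mul (hL : HasLevySheetExponent μ L Ψ) {c : ℝ} (hc : 0 ≤ c) :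
    HasLevySheetExponent μ (fun p q => L (c * p) (c * q)) (fun ξ => ((c * c : ℝ) : ℂ) * Ψ ξ) := by
  have hIoc : ∀ {a₁ a₂ b₁ b₂ : ℝ}, Disjoint (Set.Ioc a₁ a₂) (Set.Ioc b₁ b₂) →
      Disjoint (Set.Ioc (c * a₁) (c * a₂)) (Set.Ioc (c * b₁) (c * b₂)) := fun h => by
    rw [Set.Ioc_disjoint_Ioc, ← mul_min_of_nonneg _ _ hc, ← mul_max_of_nonneg _ _ hc] at *
    exact mul_le_mul_of_nonneg_left h hc
  intro k s t s' t' ξ hst hdisj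
  have h := hL k (c * s ·) (c * t ·) (c * s' ·) (c * t' ·) ξ
    (fun j hj => by
      obtain ⟨h1, h2, h3, h4⟩ := hst j hj
      exact ⟨mul_nonneg hc h1, mul_le_mul_of_nonneg_left h2 hc, mul_nonneg hc h3,
        mul_le_mul_of_nonneg_left h4 hc⟩)
    (fun i j hi hj hij => by
      rw [Set.disjoint_prod]
      exact (Set.disjoint_prod.1 (hdisj i j hi hj hij)).imp hIoc hIoc)
  refine h.trans (congrArg _ (congrArg _ (Finset.sum_congr rfl fun j _ => ?_)))
  push_cast
  ring

theorem inf'_re_le_re_mul_int (hL : HasLevySheetExponent μ L Ψ) {m : ℕ}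
    (hm : (Icc 1 m).Nonempty) (θ : ℝ) {z : ℤ} (hz : z ≠ 0) (hzm : z.natAbs ≤ m) :
    (Icc 1 m).inf' hm (fun k => (Ψ (k * θ)).re) ≤ (Ψ (θ * z)).re := by
  refine (inf'_le _ (mem_Icc.2 ⟨Int.natAbs_pos.2 hz, hzm⟩)).trans_eq ?_
  rw [Nat.cast_natAbs, Int.cast_abs]
  rcases abs_choice (z : ℝ) with h | h <;> rw [h]
  · ring_nf
  · rw [← hL.re_neg]; ring_nf

theorem integral_exp_sum_sum_rectIncrement (hL : HasLevySheetExponent μ L Ψ) {P Q : ℕ}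
    {u v : ℕ → ℝ} (hu : MonotoneOn u (Set.Iic P)) (hv : MonotoneOn v (Set.Iic Q))
    (hu0 : 0 ≤ u 0) (hv0 : 0 ≤ v 0) (ξ : ℕ → ℕ → ℝ) :
    ∫ ω, Complex.exp (Complex.I * ((∑ i ∈ range P, ∑ i' ∈ range Q, ξ i i' *
        rectIncrement (fun p q => L p q ω) (u i) (v i') (u (i + 1)) (v (i' + 1)) : ℝ) : ℂ)) ∂μ
      = Complex.exp (-∑ i ∈ range P, ∑ i' ∈ range Q,
          (((u (i + 1) - u i) * (v (i' + 1) - v i') : ℝ) : ℂ) * Ψ (ξ i i')) := by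
  have hdiv : ∀ e < P * Q, e / Q < P ∧ e % Q < Q := fun e he =>
    ⟨Nat.div_lt_of_lt_mul (by rwa [mul_comm]),
      Nat.mod_lt _ (Nat.pos_of_ne_zero (by rintro rfl; simp at he))⟩
  -- the cell `(i, i')` of the grid is listed as the rectangle number `e = i * Q + i'`
  have h := hL (P * Q) (fun e => u (e / Q)) (fun e => v (e % Q)) (fun e => u (e / Q + 1))
    (fun e => v (e % Q + 1)) (fun e => ξ (e / Q) (e % Q))
    (fun e he => ⟨(hu.nonneg_and_le_succ hu0 (hdiv e he).1).1,
      (hu.nonneg_and_le_succ hu0 (hdiv e he).1).2, (hv.nonneg_and_le_succ hv0 (hdiv e he).2).1,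
      (hv.nonneg_and_le_succ hv0 (hdiv e he).2).2⟩)
    (fun e f he hf hef => by
      rw [Set.disjoint_prod]
      by_cases hdiv_eq : e / Q = f / Q
      · refine Or.inr (hv.disjoint_Ioc_succ (hdiv e he).2 (hdiv f hf).2 fun hmod => hef ?_)
        rw [← Nat.div_add_mod e Q, ← Nat.div_add_mod f Q, hdiv_eq, hmod]
      · exact Or.inl (hu.disjoint_Ioc_succ (hdiv e he).1 (hdiv f hf).1 hdiv_eq))
  rw [sum_range_mul_div_mod P Q (fun i i' =>
    (((u (i + 1) - u i) * (v (i' + 1) - v i') : ℝ) : ℂ) * Ψ (ξ i i'))] at h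
  rw [← h]
  congr 1; funext ω
  rw [sum_range_mul_div_mod P Q (fun i i' => ((ξ i i' : ℝ) : ℂ) *
    ((rectIncrement (fun p q => L p q ω) (u i) (v i') (u (i + 1)) (v (i' + 1)) : ℝ) : ℂ))]
  push_cast
  rfl

theorem norm_integral_exp_sum_sum_rectIncrement (hL : HasLevySheetExponent μ L Ψ) {P Q : ℕ}
    {u v : ℕ → ℝ} (hu : MonotoneOn u (Set.Iic P)) (hv : MonotoneOn v (Set.Iic Q))
    (hu0 : 0 ≤ u 0) (hv0 : 0 ≤ v 0) (ξ : ℕ → ℕ → ℝ) :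
    ‖∫ ω, Complex.exp (Complex.I * ((∑ i ∈ range P, ∑ i' ∈ range Q, ξ i i' *
        rectIncrement (fun p q => L p q ω) (u i) (v i') (u (i + 1)) (v (i' + 1)) : ℝ) : ℂ)) ∂μ‖
      = Real.exp (-∑ i ∈ range P, ∑ i' ∈ range Q,
          (u (i + 1) - u i) * (v (i' + 1) - v i') * (Ψ (ξ i i')).re) := by
  rw [hL.integral_exp_sum_sum_rectIncrement hu hv hu0 hv0, Complex.norm_exp]
  simp [Complex.re_sum]

theorem norm_integral_exp_sign_sum_le (hL : HasLevySheetExponent μ L Ψ)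
    (hzero : ∀ x y ω, L x 0 ω = 0 ∧ L 0 y ω = 0) (hre : ∀ ξ, 0 ≤ (Ψ ξ).re)
    {m : ℕ} (hm : Even m) {θ A : ℝ} (hA0 : 0 ≤ A)
    (hA : ∀ z : ℤ, z ≠ 0 → z.natAbs ≤ m → A ≤ (Ψ (θ * z)).re)
    {x y xs ys : ℕ → ℝ} {σ τ : Equiv.Perm (Fin m)}
    (hxs : ∀ j : Fin m, xs j = x (σ j)) (hys : ∀ j : Fin m, ys j = y (τ j))
    (hxsmono : ∀ i j, i ≤ j → j < m → xs i ≤ xs j)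
    (hysmono : ∀ i j, i ≤ j → j < m → ys i ≤ ys j)
    (hxs2 : ∀ i < m, xs i ≤ 2 * xs 0) (hys2 : ∀ i < m, ys i ≤ 2 * ys 0)
    {δ : ℕ → ℤ} (hδ : ∀ j, δ j = 1 ∨ δ j = -1) :
    ‖∫ ω, Complex.exp (Complex.I *
        ((∑ j ∈ range m, (δ j : ℝ) * (θ * L (x j) (y j) ω) : ℝ) : ℂ)) ∂μ‖
      ≤ Real.exp (-(A / 2) * (∑ k ∈ range (m / 2), xs (2 * k) * (ys (2 * k + 1) - ys (2 * k))
          + ∑ k ∈ range (m / 2), ys (2 * k) * (xs (2 * k + 1) - xs (2 * k)))) := by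
  classical
  set u := zeroCons xs
  set v := zeroCons ys
  -- the `j`-th point is the grid node `(σ⁻¹ j + 1, τ⁻¹ j + 1)`
  set C : ℕ → ℕ → ℤ := fun i i' =>
    ∑ j : Fin m with i < (σ.symm j : ℕ) + 1 ∧ i' < (τ.symm j : ℕ) + 1, δ j
  have hdecomp : ∀ ω, ∑ j ∈ range m, (δ j : ℝ) * (θ * L (x j) (y j) ω) =
      ∑ i ∈ range m, ∑ i' ∈ range m, θ * (C i i' : ℝ) *
        rectIncrement (fun p q => L p q ω) (u i) (v i') (u (i + 1)) (v (i' + 1)) := by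
    intro ω
    have hpoint : ∀ j : Fin m, x j = u ((σ.symm j : ℕ) + 1) ∧ y j = v ((τ.symm j : ℕ) + 1) :=
      fun j => by simp [u, v, zeroCons, hxs, hys]
    rw [sum_range (fun j => (δ j : ℝ) * (θ * L (x j) (y j) ω))]
    simp_rw [hpoint, ← mul_assoc, mul_comm (δ _ : ℝ) θ]
    rw [sum_mul_eq_sum_sum_rectIncrement (P := m) (Q := m) _ _ (fun j _ => (σ.symm j).isLt)
      (fun j _ => (τ.symm j).isLt) (fun p q => L p q ω) u v (fun q => (hzero 0 q ω).2)
      (fun p => (hzero p 0 ω).1)]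
    simp [C, mul_sum]
  have hodd : ∀ (π : Equiv.Perm (Fin m)) {k : ℕ}, 2 * k < m →
      A ≤ (Ψ (θ * ((∑ j with 2 * k < (π j : ℕ), δ j : ℤ) : ℝ))).re := fun π k hk =>
    have h := π.sum_filter_two_mul_lt_apply_ne_zero_and_natAbs_le hm hk (δ := fun j => δ j)
      fun j => hδ j
    hA _ h.1 h.2
  have hu : MonotoneOn u (Set.Iic m) := monotoneOn_zeroCons_of_le_two_mul hxsmono hxs2
  have hv : MonotoneOn v (Set.Iic m) := monotoneOn_zeroCons_of_le_two_mul hysmono hys2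
  simp_rw [hdecomp]
  rw [hL.norm_integral_exp_sum_sum_rectIncrement hu hv le_rfl le_rfl, Real.exp_le_exp, neg_mul,
    neg_le_neg_iff]
  refine half_mul_sum_paired_le_sum_sum_zeroCons hxsmono hysmono hxs2 hys2 hA0
    (fun i _ i' _ => hre _) fun k hk => ⟨?_, ?_⟩
  · have hcol : C 0 (2 * k + 1) = ∑ j with 2 * k < (τ.symm j : ℕ), δ j :=
      sum_congr (filter_congr fun j _ => by omega) fun _ _ => rfl
    rw [hcol]
    exact hodd τ.symm (by omega)
  · have hrow : C (2 * k + 1) 0 = ∑ j with 2 * k < (σ.symm j : ℕ), δ j :=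
      sum_congr (filter_congr fun j _ => by omega) fun _ _ => rfl
    rw [hrow]
    exact hodd σ.symm (by omega)

end HasLevySheetExponent

open Set

theorem levy_sheet_product_of_cosines_bound_general
    {Ω : Type*} [MeasurableSpace Ω] (μ : Measure Ω) [IsProbabilityMeasure μ]
    (L : ℝ → ℝ → Ω → ℝ) (a b : ℝ → ℝ) (Ψ : ℝ → ℂ)
    (hLmeas : Measurable fun q : ℝ × ℝ × Ω => L q.1 q.2.1 q.2.2)
    (hΨ : ∀ ξ, Ψ ξ = (a ξ : ℂ) + (b ξ : ℂ) * Complex.I)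
    (ha : ∀ ξ, 0 ≤ a ξ)
    (hzero : ∀ x y ω, L x 0 ω = 0 ∧ L 0 y ω = 0)
    -- Lévy sheet: joint characteristic function of increments over pairwise
    -- disjoint rectangles (encodes independence and the Lévy–Khintchine formula)
    (hchar : ∀ (k : ℕ) (s t s' t' ξ : ℕ → ℝ),
      (∀ j, j < k → 0 ≤ s j ∧ s j ≤ s' j ∧ 0 ≤ t j ∧ t j ≤ t' j) →
      (∀ i j, i < k → j < k → i ≠ j →
        Disjoint (Ioc (s i) (s' i) ×ˢ Ioc (t i) (t' i))
                 (Ioc (s j) (s' j) ×ˢ Ioc (t j) (t' j))) →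
      ∫ ω, Complex.exp (Complex.I *
          (∑ j ∈ Finset.range k, (ξ j : ℂ) *
            ((L (s' j) (t' j) ω - L (s' j) (t j) ω - L (s j) (t' j) ω
               + L (s j) (t j) ω : ℝ) : ℂ))) ∂μ
        = Complex.exp (-∑ j ∈ Finset.range k,
            (((s' j - s j) * (t' j - t j) : ℝ) : ℂ) * Ψ (ξ j)))
    (m : ℕ) (hm : Even m) (hm1 : 1 ≤ m)
    (θ : ℝ)
    (s₀ s₀' t₀ t₀' : ℝ)
    (hs2 : s₀' < 2 * s₀)
    (ht2 : t₀' < 2 * t₀)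
    (n : ℕ)
    (x y : ℕ → ℝ)
    (hxy : ∀ j, j < m → s₀ < x j ∧ x j < s₀' ∧ t₀ < y j ∧ y j < t₀')
    -- `xs`, `ys` : the values `x_j`, `y_j` sorted in increasing order
    (σ τ : Equiv.Perm (Fin m)) (xs ys : ℕ → ℝ)
    (hxs : ∀ j : Fin m, xs j = x (σ j)) (hys : ∀ j : Fin m, ys j = y (τ j))
    (hxsmono : ∀ i j, i ≤ j → j < m → xs i ≤ xs j)
    (hysmono : ∀ i j, i ≤ j → j < m → ys i ≤ ys j) :
    ∫ ω, (∏ j ∈ Finset.range m,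
        Real.cos (θ * L (Real.sqrt n * x j) (Real.sqrt n * y j) ω)) ∂μ
      ≤ Real.exp (-(n / 2) * ((Finset.Icc 1 m).inf' (Finset.nonempty_Icc.mpr hm1)
            fun k => a ((k : ℝ) * θ)) *
          ∑ k ∈ Finset.range (m / 2), xs (2 * k) * (ys (2 * k + 1) - ys (2 * k)))
        * Real.exp (-(n / 2) * ((Finset.Icc 1 m).inf' (Finset.nonempty_Icc.mpr hm1)
            fun k => a ((k : ℝ) * θ)) *
          ∑ k ∈ Finset.range (m / 2), ys (2 * k) * (xs (2 * k + 1) - xs (2 * k))) := by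
  obtain rfl : a = fun ξ => (Ψ ξ).re := funext fun ξ => by simp [hΨ]
  beta_reduce at ha ⊢
  have hL : HasLevySheetExponent μ L Ψ := hchar
  set A := (Finset.Icc 1 m).inf' (Finset.nonempty_Icc.mpr hm1) fun k => (Ψ ((k : ℝ) * θ)).re
  set S := Real.sqrt n
  have hLn : HasLevySheetExponent μ (fun p q => L (S * p) (S * q))
      (fun ξ => ((n : ℝ) : ℂ) * Ψ ξ) := by
    simpa only [S, Real.mul_self_sqrt (Nat.cast_nonneg n)] using hL.comp_mul (Real.sqrt_nonneg n)
  have hAn : ∀ z : ℤ, z ≠ 0 → z.natAbs ≤ m → n * A ≤ (((n : ℝ) : ℂ) * Ψ (θ * z)).re :=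
    fun z hz hzm => by
      rw [Complex.re_ofReal_mul]
      exact mul_le_mul_of_nonneg_left (hL.inf'_re_le_re_mul_int _ θ hz hzm) n.cast_nonneg
  have hxs_mem : ∀ i < m, s₀ < xs i ∧ xs i < s₀' := fun i hi => by
    have := hxy _ (σ ⟨i, hi⟩).isLt; rw [show xs i = x (σ ⟨i, hi⟩) from hxs ⟨i, hi⟩]; tauto
  have hys_mem : ∀ i < m, t₀ < ys i ∧ ys i < t₀' := fun i hi => by
    have := hxy _ (τ ⟨i, hi⟩).isLt; rw [show ys i = y (τ ⟨i, hi⟩) from hys ⟨i, hi⟩]; tauto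
  refine integral_prod_cos_le _ (w := fun j ω => θ * L (S * x j) (S * y j) ω) (fun j _ =>
    (hLmeas.comp (measurable_const.prodMk (measurable_const.prodMk measurable_id))).const_mul θ)
    fun δ hδ => ?_
  refine (hLn.norm_integral_exp_sign_sum_le (A := n * A)
    (fun p q ω => by simpa using hzero (S * p) (S * q) ω)
    (fun ξ => by simpa [Complex.re_ofReal_mul] using mul_nonneg n.cast_nonneg (ha ξ)) hm
    (mul_nonneg n.cast_nonneg (Finset.le_inf' _ _ fun k _ => ha _)) hAn hxs hys hxsmono hysmono
    (fun i hi => by linarith [hxs_mem i hi, hxs_mem 0 (by omega)])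
    (fun i hi => by linarith [hys_mem i hi, hys_mem 0 (by omega)]) hδ).trans_eq ?_
  rw [← Real.exp_add]
  ring_nf

/-- Bound for the expectation of a product of cosines of a Lévy sheet
(Lemma on products of cosines): for points `(x_j,y_j)` in `(s₀,s₀')×(t₀,t₀')` with
`s₀' < 2s₀`, `t₀' < 2t₀`, denoting by `xs, ys` the sorted values of the `x_j` and `y_j`,
`E[∏ cos(θL(√n x_j, √n y_j))]` is bounded by the product of the two exponentials
involving `a*(θ) = min{a(θ),…,a(mθ)}` and the paired order statistics. -/
theorem levy_sheet_product_of_cosines_bound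
    {Ω : Type*} [MeasurableSpace Ω] (μ : Measure Ω) [IsProbabilityMeasure μ]
    (L : ℝ → ℝ → Ω → ℝ) (a b : ℝ → ℝ) (Ψ : ℝ → ℂ)
    (hLmeas : Measurable fun q : ℝ × ℝ × Ω => L q.1 q.2.1 q.2.2)
    (hΨ : ∀ ξ, Ψ ξ = (a ξ : ℂ) + (b ξ : ℂ) * Complex.I)
    (ha : ∀ ξ, 0 ≤ a ξ)
    (hzero : ∀ x y ω, L x 0 ω = 0 ∧ L 0 y ω = 0)
    -- Lévy sheet: joint characteristic function of increments over pairwise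
    -- disjoint rectangles (encodes independence and the Lévy–Khintchine formula)
    (hchar : ∀ (k : ℕ) (s t s' t' ξ : ℕ → ℝ),
      (∀ j, j < k → 0 ≤ s j ∧ s j ≤ s' j ∧ 0 ≤ t j ∧ t j ≤ t' j) →
      (∀ i j, i < k → j < k → i ≠ j →
        Disjoint (Ioc (s i) (s' i) ×ˢ Ioc (t i) (t' i))
                 (Ioc (s j) (s' j) ×ˢ Ioc (t j) (t' j))) →
      ∫ ω, Complex.exp (Complex.I *
          (∑ j ∈ Finset.range k, (ξ j : ℂ) *
            ((L (s' j) (t' j) ω - L (s' j) (t j) ω - L (s j) (t' j) ω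
               + L (s j) (t j) ω : ℝ) : ℂ))) ∂μ
        = Complex.exp (-∑ j ∈ Finset.range k,
            (((s' j - s j) * (t' j - t j) : ℝ) : ℂ) * Ψ (ξ j)))
    (m : ℕ) (hm : Even m) (hm1 : 1 ≤ m)
    (θ : ℝ) (hθ : θ ∈ Ioo (0:ℝ) (2 * Real.pi))
    (haθ : ∀ k : ℕ, 1 ≤ k → k ≤ m → a ((k : ℝ) * θ) ≠ 0)
    (s₀ s₀' t₀ t₀' : ℝ)
    (hs : 0 < s₀) (hs' : s₀ < s₀') (hs2 : s₀' < 2 * s₀)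
    (ht : 0 < t₀) (ht' : t₀ < t₀') (ht2 : t₀' < 2 * t₀)
    (n : ℕ)
    (x y : ℕ → ℝ)
    (hxy : ∀ j, j < m → s₀ < x j ∧ x j < s₀' ∧ t₀ < y j ∧ y j < t₀')
    -- `xs`, `ys` : the values `x_j`, `y_j` sorted in increasing order
    (σ τ : Equiv.Perm (Fin m)) (xs ys : ℕ → ℝ)
    (hxs : ∀ j : Fin m, xs j = x (σ j)) (hys : ∀ j : Fin m, ys j = y (τ j))
    (hxsmono : ∀ i j, i ≤ j → j < m → xs i ≤ xs j)
    (hysmono : ∀ i j, i ≤ j → j < m → ys i ≤ ys j) :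
    ∫ ω, (∏ j ∈ Finset.range m,
        Real.cos (θ * L (Real.sqrt n * x j) (Real.sqrt n * y j) ω)) ∂μ
      ≤ Real.exp (-(n / 2) * ((Finset.Icc 1 m).inf' (Finset.nonempty_Icc.mpr hm1)
            fun k => a ((k : ℝ) * θ)) *
          ∑ k ∈ Finset.range (m / 2), xs (2 * k) * (ys (2 * k + 1) - ys (2 * k)))
        * Real.exp (-(n / 2) * ((Finset.Icc 1 m).inf' (Finset.nonempty_Icc.mpr hm1)
            fun k => a ((k : ℝ) * θ)) *
          ∑ k ∈ Finset.range (m / 2), ys (2 * k) * (xs (2 * k + 1) - xs (2 * k))) :=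
  levy_sheet_product_of_cosines_bound_general μ L a b Ψ hLmeas hΨ ha hzero hchar m hm hm1 θ s₀ s₀'
    t₀ t₀' hs2 ht2 n x y hxy σ τ xs ys hxs hys hxsmono hysmono
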